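/- arXiv:2407.10544 — 2 statements merged into one kernel-verified Lean document; each statement's English description precedes it below -/
import Mathlib

section
/- Let J, R ∈ ℝ^{n×n} with J = -Jᵀ and R symmetric positive semidefinite, let D ∈ ℝ^{n×k} with rank [R, D] = n, and let K ∈ ℝ^{k×k} symmetric positive definite. Then the matrix A := J - R - D K⁻¹ Dᵀ is Hurwitz, i.e., every eigenvalue λ of A satisfies Re λ < 0. -/
open Matrix

/-- A real square matrix is Hurwitz if all of its complex eigenvalues have
negative real part. -/
def IsHurwitz {n : Type*} [Fintype n] [DecidableEq n]
    (A : Matrix n n ℝ) : Prop :=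
  ∀ μ ∈ spectrum ℂ (A.map Complex.ofReal), μ.re < 0

/-! With `S = R + D K⁻¹ Dᵀ` we have `A = J - S`, where `S` is positive semidefinite and
`xᵀ S x = 0` forces `R x = 0` and `Dᵀ x = 0`, hence `x = 0` by the rank condition: `S` is positive
definite. For a complex eigenpair `A v = μ v`, the real part of `v* A v = μ ‖v‖²` loses the
skew-Hermitian term `v* J v` and leaves `Re μ ‖v‖² = -v* S v < 0`. -/

open scoped ComplexOrder

namespace Matrix

variable {m n l : Type*}

theorem mulVec_injective_of_rank_eq_card {K : Type*} [Field K] [Fintype n] {M : Matrix m n K}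
    (h : M.rank = Fintype.card n) : Function.Injective M.mulVec := by
  have key := M.mulVecLin.finrank_range_add_finrank_ker
  rw [show Module.finrank K (LinearMap.range M.mulVecLin) = M.rank from rfl, h,
    Module.finrank_fintype_fun_eq_card, add_eq_left, Submodule.finrank_eq_zero] at key
  exact LinearMap.ker_eq_bot.mp key

theorem vecMul_injective_of_rank_eq_card {K : Type*} [Field K] [Fintype m] [Fintype n]
    {M : Matrix m n K} (h : M.rank = Fintype.card m) : Function.Injective (· ᵥ* M) := fun x y hxy ↦
  mulVec_injective_of_rank_eq_card (M := Mᵀ) (by rwa [rank_transpose]) <| by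
    simpa only [mulVec_transpose] using hxy

theorem re_star_dotProduct_mulVec_eq_zero {𝕜 : Type*} [RCLike 𝕜] [Fintype n]
    {J : Matrix n n 𝕜} (hJ : Jᴴ = -J) (v : n → 𝕜) : RCLike.re (star v ⬝ᵥ J *ᵥ v) = 0 := by
  have hconj : star (star v ⬝ᵥ J *ᵥ v) = -(star v ⬝ᵥ J *ᵥ v) := by
    rw [← star_dotProduct, star_mulVec, ← dotProduct_mulVec, hJ, neg_mulVec, dotProduct_neg]
  have hre := congrArg RCLike.re hconj
  rw [RCLike.star_def, RCLike.conj_re, map_neg] at hre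
  linarith

theorem posDef_add_mul_inv_mul_transpose [Fintype n] [Fintype l] [DecidableEq l]
    {R : Matrix n n ℝ} {D : Matrix n l ℝ} {K : Matrix l l ℝ}
    (hR : R.PosSemidef) (hK : K.PosDef) (hrank : (fromCols R D).rank = Fintype.card n) :
    (R + D * K⁻¹ * Dᵀ).PosDef := by
  have hP : (D * K⁻¹ * Dᵀ).PosSemidef := hK.inv.posSemidef.mul_mul_conjTranspose_same D
  refine .of_dotProduct_mulVec_pos (hR.isHermitian.add hP.isHermitian) fun x hx ↦ ?_
  have hsplit : star x ⬝ᵥ (R + D * K⁻¹ * Dᵀ) *ᵥ x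
      = star x ⬝ᵥ R *ᵥ x + star (Dᵀ *ᵥ x) ⬝ᵥ K⁻¹ *ᵥ (Dᵀ *ᵥ x) := by
    simp only [add_mulVec, dotProduct_add, ← mulVec_mulVec, dotProduct_mulVec _ D, star_trivial,
      ← mulVec_transpose]
  rw [hsplit]
  refine (add_nonneg (hR.dotProduct_mulVec_nonneg x)
    (hK.inv.posSemidef.dotProduct_mulVec_nonneg _)).lt_of_ne' fun h0 ↦ hx ?_
  obtain ⟨hqR, hqK⟩ := (add_eq_zero_iff_of_nonneg (hR.dotProduct_mulVec_nonneg x)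
    (hK.inv.posSemidef.dotProduct_mulVec_nonneg _)).mp h0
  have hRx : x ᵥ* R = 0 := by
    rw [← mulVec_transpose, ← conjTranspose_eq_transpose_of_trivial, hR.isHermitian]
    exact (hR.dotProduct_mulVec_zero_iff x).mp hqR
  have hDx : x ᵥ* D = 0 := by
    rw [← mulVec_transpose]
    by_contra hne
    exact (hK.inv.dotProduct_mulVec_pos hne).ne' hqK
  refine vecMul_injective_of_rank_eq_card hrank ?_
  simp [hRx, hDx]

theorem re_lt_zero_of_mem_spectrum_sub {𝕜 : Type*} [RCLike 𝕜] [Fintype n] [DecidableEq n]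
    {J S : Matrix n n 𝕜} (hJ : Jᴴ = -J) (hS : S.PosDef) {μ : 𝕜}
    (hμ : μ ∈ spectrum 𝕜 (J - S)) : RCLike.re μ < 0 := by
  rw [← spectrum_toLin', ← Module.End.hasEigenvalue_iff_mem_spectrum] at hμ
  obtain ⟨v, hv⟩ := hμ.exists_hasEigenvector
  have hAv : (J - S) *ᵥ v = μ • v := by simpa only [toLin'_apply] using hv.apply_eq_smul
  have hquad : star v ⬝ᵥ J *ᵥ v - star v ⬝ᵥ S *ᵥ v = μ * (star v ⬝ᵥ v) := by
    rw [← dotProduct_sub, ← sub_mulVec, hAv, dotProduct_smul, smul_eq_mul]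
  obtain ⟨hvv_re, hvv_im⟩ := RCLike.pos_iff.mp (dotProduct_star_self_pos_iff.mpr hv.2)
  have hSv := (RCLike.pos_iff.mp (hS.dotProduct_mulVec_pos hv.2)).1
  have hre := congrArg RCLike.re hquad
  rw [map_sub, re_star_dotProduct_mulVec_eq_zero hJ, RCLike.mul_re, hvv_im, mul_zero,
    sub_zero] at hre
  nlinarith

open scoped MatrixOrder in
theorem PosDef.map_ofReal [Fintype n] {S : Matrix n n ℝ} (hS : S.PosDef) :
    (S.map Complex.ofReal).PosDef := by
  classical
  obtain ⟨B, rfl⟩ := CStarAlgebra.nonneg_iff_eq_star_mul_self.mp hS.posSemidef.nonneg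
  have hmap :
      (star B * B).map Complex.ofReal = (B.map Complex.ofReal)ᴴ * B.map Complex.ofReal := by
    rw [← conjTranspose_map _ (fun _ ↦ (Complex.conj_ofReal _).symm), star_eq_conjTranspose]
    exact Matrix.map_mul (f := Complex.ofRealHom)
  rw [hmap, (posSemidef_conjTranspose_mul_self _).posDef_iff_isUnit, ← hmap]
  exact hS.isUnit.map Complex.ofRealHom.mapMatrix

end Matrix

theorem isHurwitz_sub_of_posDef {n : Type*} [Fintype n] [DecidableEq n] {J S : Matrix n n ℝ}
    (hJ : Jᵀ = -J) (hS : S.PosDef) : IsHurwitz (J - S) := by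
  intro μ hμ
  refine re_lt_zero_of_mem_spectrum_sub (J := J.map Complex.ofReal) ?_ hS.map_ofReal ?_
  · rw [← conjTranspose_map _ (fun _ ↦ (Complex.conj_ofReal _).symm),
      conjTranspose_eq_transpose_of_trivial, hJ]
    exact Matrix.map_neg _ Complex.ofReal_neg J
  · simpa only [Matrix.map_sub _ Complex.ofReal_sub] using hμ

theorem hurwitz_of_rank_condition {n k : ℕ}
    (J R : Matrix (Fin n) (Fin n) ℝ) (D : Matrix (Fin n) (Fin k) ℝ)
    (K : Matrix (Fin k) (Fin k) ℝ)
    (hJ : Jᵀ = -J) (hR : R.PosSemidef)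
    (hrank : (Matrix.fromCols R D).rank = n)
    (hK : K.PosDef) :
    IsHurwitz (J - R - D * K⁻¹ * Dᵀ) := by
  rw [sub_sub]
  exact isHurwitz_sub_of_posDef hJ
    (posDef_add_mul_inv_mul_transpose hR hK (by rwa [Fintype.card_fin]))
end

section
/- (Bass stabilization) Let A ∈ ℝ^{n×n}, D ∈ ℝ^{n×k}, α > 0 with α larger than the largest singular value of A (so that -αI - Aᵀ and related matrices are stable), and suppose K̂ = K̂ᵀ > 0 solves the Lyapunov equation (αI + A)K̂ + K̂(αI + Aᵀ) = 2 D Dᵀ. Then A - D Dᵀ K̂⁻¹ is Hurwitz. -/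
/-!
With `F = A - D Dᵀ K̂⁻¹`, the Lyapunov equation for `K̂` becomes `F K̂ + K̂ Fᵀ = -2α K̂`.
If `Fᵀ v = μ v` for a complex `v ≠ 0`, applying `v* (·) v` to both sides gives
`2 Re μ · v* K̂ v = -2α · v* K̂ v`, and `v* K̂ v > 0` forces `Re μ = -α < 0`.
-/

open Matrix

open scoped ComplexOrder

namespace Matrix

variable {n : Type*} [Fintype n]

lemma re_star_dotProduct_map_ofReal_mulVec (K : Matrix n n ℝ) (v : n → ℂ) :
    (star v ⬝ᵥ (K.map (↑) *ᵥ v)).re =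
      (fun i ↦ (v i).re) ⬝ᵥ (K *ᵥ fun i ↦ (v i).re) +
        (fun i ↦ (v i).im) ⬝ᵥ (K *ᵥ fun i ↦ (v i).im) := by
  simp only [dotProduct, mulVec, Pi.star_apply, map_apply, Complex.re_sum, Finset.mul_sum,
    ← Finset.sum_add_distrib]
  refine Finset.sum_congr rfl fun i _ ↦ Finset.sum_congr rfl fun j _ ↦ ?_
  simp [Complex.mul_re]

theorem PosDef.map_ofReal_s13 {K : Matrix n n ℝ} (hK : K.PosDef) :
    (K.map ((↑) : ℝ → ℂ)).PosDef := by
  have hKc : (K.map ((↑) : ℝ → ℂ)).IsHermitian :=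
    hK.isHermitian.map _ fun _ ↦ (Complex.conj_ofReal _).symm
  refine .of_dotProduct_mulVec_pos hKc fun v hv ↦
    RCLike.pos_iff.mpr ⟨?_, hKc.im_star_dotProduct_mulVec_self v⟩
  have hv' : (fun i ↦ (v i).re) ≠ 0 ∨ (fun i ↦ (v i).im) ≠ 0 := by
    by_contra! h
    exact hv (funext fun i ↦ Complex.ext (congrFun h.1 i) (congrFun h.2 i))
  change 0 < (star v ⬝ᵥ (K.map (↑) *ᵥ v)).re
  rw [re_star_dotProduct_map_ofReal_mulVec]
  rcases hv' with h | h
  · exact add_pos_of_pos_of_nonneg (hK.dotProduct_mulVec_pos h)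
      (hK.posSemidef.dotProduct_mulVec_nonneg _)
  · exact add_pos_of_nonneg_of_pos (hK.posSemidef.dotProduct_mulVec_nonneg _)
      (hK.dotProduct_mulVec_pos h)

theorem spectrum_transpose {K : Type*} [Field K] [DecidableEq n] (M : Matrix n n K) :
    spectrum K Mᵀ = spectrum K M := by
  ext μ
  simp only [mem_spectrum_iff_isRoot_charpoly, charpoly_transpose]

variable [DecidableEq n] {𝕜 : Type*} [RCLike 𝕜]

theorem re_lt_zero_of_mem_spectrum_of_lyapunov {M K : Matrix n n 𝕜} (hK : K.PosDef)
    (hL : (-(Mᴴ * K + K * M)).PosDef) {μ : 𝕜} (hμ : μ ∈ spectrum 𝕜 M) : RCLike.re μ < 0 := by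
  rw [← spectrum_toLin', ← Module.End.hasEigenvalue_iff_mem_spectrum] at hμ
  obtain ⟨v, hv⟩ := hμ.exists_hasEigenvector
  have hMv : M *ᵥ v = μ • v := hv.apply_eq_smul
  have hvM : star v ᵥ* Mᴴ = star μ • star v := by
    rw [← star_mulVec, hMv, star_smul]
  have hq : star v ⬝ᵥ ((Mᴴ * K + K * M) *ᵥ v) =
      ((2 * RCLike.re μ : ℝ) : 𝕜) * (star v ⬝ᵥ (K *ᵥ v)) := by
    rw [add_mulVec, ← mulVec_mulVec, ← mulVec_mulVec, hMv, dotProduct_add, dotProduct_mulVec, hvM]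
    simp only [mulVec_smul, dotProduct_smul, smul_dotProduct, smul_eq_mul, RCLike.ofReal_mul,
      RCLike.ofReal_ofNat, ← RCLike.add_conj, RCLike.star_def]
    ring
  have hneg := hL.re_dotProduct_pos hv.2
  have hpos := hK.re_dotProduct_pos hv.2
  rw [neg_mulVec, dotProduct_neg, map_neg, hq, RCLike.re_ofReal_mul] at hneg
  nlinarith

end Matrix

theorem isHurwitz_of_lyapunov {n : Type*} [Fintype n] [DecidableEq n] {F K : Matrix n n ℝ}
    (hK : K.PosDef) (hL : (-(F * K + K * Fᵀ)).PosDef) : IsHurwitz F := by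
  intro μ hμ
  rw [← spectrum_transpose] at hμ
  have hLc : -((F.map Complex.ofReal)ᵀᴴ * K.map Complex.ofReal +
      K.map Complex.ofReal * (F.map Complex.ofReal)ᵀ) =
        (-(F * K + K * Fᵀ)).map Complex.ofReal := by
    ext i j
    simp [mul_apply]
  refine re_lt_zero_of_mem_spectrum_of_lyapunov hK.map_ofReal_s13 ?_ hμ
  rw [hLc]
  exact hL.map_ofReal_s13

theorem bass_stabilization_general {n k : ℕ}
    (A : Matrix (Fin n) (Fin n) ℝ) (D : Matrix (Fin n) (Fin k) ℝ)
    (α : ℝ) (hα : 0 < α)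
    (Khat : Matrix (Fin n) (Fin n) ℝ) (hK : Khat.PosDef)
    (hLyap : (α • (1 : Matrix (Fin n) (Fin n) ℝ) + A) * Khat +
        Khat * (α • (1 : Matrix (Fin n) (Fin n) ℝ) + Aᵀ) = (2 : ℝ) • (D * Dᵀ)) :
    IsHurwitz (A - D * Dᵀ * Khat⁻¹) := by
  have hKinv : IsUnit Khat.det := hK.isUnit.map detMonoidHom
  have hKsymm : Khatᵀ = Khat := hK.isHermitian.eq
  have hClosed : (A - D * Dᵀ * Khat⁻¹) * Khat + Khat * (A - D * Dᵀ * Khat⁻¹)ᵀ =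
      -(2 * α) • Khat := by
    rw [transpose_sub, transpose_mul, transpose_nonsing_inv, hKsymm, transpose_mul,
      transpose_transpose, sub_mul, mul_sub, mul_assoc, nonsing_inv_mul _ hKinv, ← mul_assoc Khat,
      mul_nonsing_inv _ hKinv, mul_one, one_mul]
    rw [add_mul, mul_add, smul_mul_assoc, one_mul, mul_smul_comm, mul_one] at hLyap
    linear_combination (norm := module) hLyap
  refine isHurwitz_of_lyapunov hK ?_
  rw [hClosed, neg_smul, neg_neg]
  exact hK.smul (by positivity)

theorem bass_stabilization {n k : ℕ}
    (A : Matrix (Fin n) (Fin n) ℝ) (D : Matrix (Fin n) (Fin k) ℝ)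
    (α : ℝ) (hα : 0 < α)
    -- `α` exceeds the largest singular value of `A`, i.e. `α²I - AᵀA ≻ 0`
    (hσ : ((α ^ 2) • (1 : Matrix (Fin n) (Fin n) ℝ) - Aᵀ * A).PosDef)
    (Khat : Matrix (Fin n) (Fin n) ℝ) (hK : Khat.PosDef)
    (hLyap : (α • (1 : Matrix (Fin n) (Fin n) ℝ) + A) * Khat +
        Khat * (α • (1 : Matrix (Fin n) (Fin n) ℝ) + Aᵀ) = (2 : ℝ) • (D * Dᵀ)) :
    IsHurwitz (A - D * Dᵀ * Khat⁻¹) :=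
  bass_stabilization_general A D α hα Khat hK hLyap
end
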